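/- Every squandle (Q, ⊲, ⊲̃, ς) whose underlying set has exactly 4 elements and in which ⊲ is non-trivial (i.e., a ⊲ b ≠ a for some a,b) is isomorphic either to the squandle S²₃ = {id, (12), (23), (13)} ⊂ S₃ with a ⊲ b = b⁻¹ab and ς(a) = a², or to (P, ⊲, ς_w) for some w ∈ {p, q, s}; moreover, S²₃ and the three structures (P, ⊲, ς_w), w ∈ {p, q, s}, are all squandles and are pairwise non-isomorphic. -/

import Mathlib

/-- The 4-element set `P = {p, q, r, s}`. -/
inductive P4 : Type
  | p | q | r | s
  deriving DecidableEq

/-- The involution `τ` of `P` exchanging `p` and `q` and fixing `r` and `s`. -/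
def tau : P4 → P4
  | .p => .q
  | .q => .p
  | .r => .r
  | .s => .s

/-- The quandle operation `⊲` on `P`: `x ⊲ r = τ(x)`, and `x ⊲ y = x` for `y ≠ r`. -/
def triP : P4 → P4 → P4
  | x, .r => tau x
  | x, _ => x

/-- The squaring operation `ς_w` on `P` with parameter `w ∈ {p, q, s}`. -/
def sqP (w : P4) : P4 → P4
  | .r => .s
  | .s => .s
  | .q => w
  | .p => tau w

/-- The subset `S²₃` of the symmetric group `S₃`, consisting of the identity and the three
transpositions. -/
def S23set : Set (Equiv.Perm (Fin 3)) :=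
  {1, Equiv.swap 0 1, Equiv.swap 1 2, Equiv.swap 0 2}

/-! In a squandle with at most four elements every right translation `· ⊲ b` is an
involution: an orbit of length three would leave `b` as the only fixed point, while `b²` is
fixed, so `b² = b` and `· ⊲ b = (· ⊲ b)²` by (SQ_1). Hence every square acts trivially, and
the set `T` of trivially acting elements is stable under every `· ⊲ c`.

If `p ⊲ r = q ≠ p` and `s` is the fourth element, then `· ⊲ r` swaps `p` and `q` and fixes `s`.
If `p ∈ T`, then `T = {p, q, s}` and `(Q, ⊲)` is `(P, ⊲)`, with squaring `ς_w` for `w = q²`.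
Otherwise `T = {s}` contains all squares; `· ⊲ p` fixes `p` and `s` but not everything, so it
is the transposition `(q r)`, and (SD) then makes `· ⊲ q` the transposition `(p r)`: this is
`S²₃`.

`S²₃` is the set of permutations of `Fin 3` squaring to `1`. In `P` only `r` acts
nontrivially, and the automorphisms of `(P, ⊲)` are `id` and `τ`, which tells the `ς_w`
apart. -/

open Function

instance : Fintype P4 :=
  ⟨{.p, .q, .r, .s}, fun x => by cases x <;> decide⟩

theorem P4.card : Nat.card P4 = 4 := by
  rw [Nat.card_eq_fintype_card]; rfl

def P4.elim {α : Sort*} (a b c d : α) : P4 → α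
  | .p => a
  | .q => b
  | .r => c
  | .s => d

theorem tau_involutive : Involutive tau := by
  intro x; cases x <;> rfl

theorem eq_r_of_triP_ne {x y : P4} (h : triP x y ≠ x) : y = .r := by
  cases y <;> first | rfl | exact absurd rfl h

theorem eq_or_eq_or_eq_or_eq_of_card_le_four {α : Type*} [Finite α] (hcard : Nat.card α ≤ 4)
    {a b c d : α} (hab : a ≠ b) (hac : a ≠ c) (had : a ≠ d) (hbc : b ≠ c) (hbd : b ≠ d)
    (hcd : c ≠ d) (t : α) : t = a ∨ t = b ∨ t = c ∨ t = d := by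
  by_contra! ht
  have hnodup : [t, a, b, c, d].Nodup := by simp [*]
  have := hnodup.length_le_natCard
  simp only [List.length_cons, List.length_nil] at this
  omega

structure IsSquandle {Q : Type*} (tri trid : Q → Q → Q) (sq : Q → Q) : Prop where
  self_distrib : ∀ a b c, tri (tri a b) c = tri (tri a c) (tri b c)
  inv : ∀ a b, trid (tri a b) b = a ∧ tri (trid a b) b = a
  idem : ∀ a, tri a a = a
  tri_sq : ∀ a b, tri a (sq b) = tri (tri a b) b
  sq_tri : ∀ a b, tri (sq a) b = sq (tri a b)

def ActsTrivially {Q : Type*} (tri : Q → Q → Q) (b : Q) : Prop :=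
  ∀ a, tri a b = a

namespace IsSquandle

variable {Q : Type*} {tri trid : Q → Q → Q} {sq : Q → Q}

theorem tri_left_injective (h : IsSquandle tri trid sq) (b : Q) : Injective (tri · b) :=
  LeftInverse.injective (g := (trid · b)) fun a => (h.inv a b).1

theorem sq_tri_self (h : IsSquandle tri trid sq) (b : Q) : tri (sq b) b = sq b := by
  rw [h.sq_tri, h.idem]

theorem comap (h : IsSquandle tri trid sq) {α : Type*} (e : α ≃ Q) :
    IsSquandle (fun a b => e.symm (tri (e a) (e b))) (fun a b => e.symm (trid (e a) (e b)))
      (fun a => e.symm (sq (e a))) := by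
  refine ⟨fun a b c => ?_, fun a b => ?_, fun a => ?_, fun a b => ?_, fun a b => ?_⟩ <;>
    simp only [Equiv.apply_symm_apply, Equiv.symm_apply_eq]
  exacts [h.self_distrib _ _ _, h.inv _ _, h.idem _, h.tri_sq _ _, h.sq_tri _ _]

theorem tri_tri_self [Finite Q] (h : IsSquandle tri trid sq) (hcard : Nat.card Q ≤ 4)
    (a b : Q) : tri (tri a b) b = a := by
  by_contra hne
  have inj := h.tri_left_injective b
  obtain ⟨a₁, h₁⟩ : ∃ x, tri a b = x := ⟨_, rfl⟩
  obtain ⟨a₂, h₂⟩ : ∃ x, tri a₁ b = x := ⟨_, rfl⟩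
  rw [h₁, h₂] at hne
  have h01 : a ≠ a₁ := by rintro rfl; exact hne (h₂.symm.trans h₁)
  have h12 : a₁ ≠ a₂ := fun e => h01 (inj (h₁.trans (e.trans h₂.symm)))
  have moved : ∀ t, tri t b = t → t ≠ a ∧ t ≠ a₁ ∧ t ≠ a₂ := by
    intro t ht
    refine ⟨?_, ?_, ?_⟩ <;> rintro rfl
    · exact h01 (ht.symm.trans h₁)
    · exact h12 (ht.symm.trans h₂)
    · exact h12 (inj (h₂.trans ht.symm))
  obtain ⟨hba, hba₁, hba₂⟩ := moved b (h.idem b)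
  have hsq : sq b = b := by
    obtain ⟨hsa, hsa₁, hsa₂⟩ := moved (sq b) (h.sq_tri_self b)
    rcases eq_or_eq_or_eq_or_eq_of_card_le_four hcard hba hba₁ hba₂ h01 (Ne.symm hne) h12
      (sq b) with e | e | e | e
    exacts [e, absurd e hsa, absurd e hsa₁, absurd e hsa₂]
  have := h.tri_sq a b
  rw [hsq, h₁, h₂] at this
  exact h12 this

theorem actsTrivially_sq (h : IsSquandle tri trid sq) (hinv : ∀ a b, tri (tri a b) b = a)
    (b : Q) : ActsTrivially tri (sq b) := fun a => by
  rw [h.tri_sq, hinv]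

theorem actsTrivially_tri_iff (h : IsSquandle tri trid sq) (hinv : ∀ a b, tri (tri a b) b = a)
    {b c : Q} : ActsTrivially tri (tri b c) ↔ ActsTrivially tri b := by
  have key : ∀ {b c}, ActsTrivially tri b → ActsTrivially tri (tri b c) := by
    intro b c hb a
    calc tri a (tri b c) = tri (tri (tri a c) c) (tri b c) := by rw [hinv]
      _ = tri (tri (tri a c) b) c := (h.self_distrib _ _ _).symm
      _ = a := by rw [hb, hinv]
  exact ⟨fun hbc => hinv b c ▸ key hbc, key⟩

end IsSquandle

theorem exists_equiv_P4 {Q : Type*} (hcard : Nat.card Q = 4) {a b c : Q} (hab : a ≠ b)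
    (hac : a ≠ c) (hbc : b ≠ c) : ∃ e : P4 ≃ Q, e .p = a ∧ e .q = b ∧ e .r = c := by
  have : Finite Q := Nat.finite_of_card_ne_zero (by omega)
  obtain ⟨d, hd⟩ : ∃ d, d ≠ a ∧ d ≠ b ∧ d ≠ c := by
    by_contra! hd
    have hsurj : Surjective ![a, b, c] := fun t => by
      by_cases hta : t = a
      · exact ⟨0, hta.symm⟩
      by_cases htb : t = b
      · exact ⟨1, htb.symm⟩
      · exact ⟨2, (hd t hta htb).symm⟩
    have := Nat.card_le_card_of_surjective _ hsurj
    rw [Nat.card_fin] at this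
    omega
  obtain ⟨hda, hdb, hdc⟩ := hd
  have hinj : Injective (P4.elim a b c d) := by
    intro x y hxy
    cases x <;> cases y <;> first | rfl | simp_all [P4.elim, eq_comm]
  have hsurj : Surjective (P4.elim a b c d) := fun t => by
    rcases eq_or_eq_or_eq_or_eq_of_card_le_four hcard.le hab hac hda.symm hbc hdb.symm hdc.symm t
      with rfl | rfl | rfl | rfl
    exacts [⟨.p, rfl⟩, ⟨.q, rfl⟩, ⟨.r, rfl⟩, ⟨.s, rfl⟩]
  exact ⟨Equiv.ofBijective _ ⟨hinj, hsurj⟩, rfl, rfl, rfl⟩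

def s3Label : P4 → Equiv.Perm (Fin 3)
  | .p => Equiv.swap 1 2
  | .q => Equiv.swap 0 2
  | .r => Equiv.swap 0 1
  | .s => 1

theorem s3Label_injective : Injective s3Label := by
  unfold Injective; decide

theorem range_s3Label : Set.range s3Label = S23set := by
  ext σ
  simp only [Set.mem_range, S23set, Set.mem_insert_iff, Set.mem_singleton_iff]
  constructor
  · rintro ⟨x, rfl⟩
    cases x <;> simp [s3Label]
  · rintro (rfl | rfl | rfl | rfl)
    exacts [⟨.s, rfl⟩, ⟨.r, rfl⟩, ⟨.p, rfl⟩, ⟨.q, rfl⟩]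

theorem mem_S23set_iff {σ : Equiv.Perm (Fin 3)} : σ ∈ S23set ↔ σ ^ 2 = 1 := by
  simp only [S23set, Set.mem_insert_iff, Set.mem_singleton_iff]
  revert σ
  decide

theorem not_actsTrivially_r {tri : P4 → P4 → P4} (hpr : tri .p .r = .q) :
    ¬ ActsTrivially tri .r :=
  fun hr => absurd (hpr.symm.trans (hr .p)) (by decide)

namespace IsSquandle

variable {tri trid : P4 → P4 → P4} {sq : P4 → P4}

theorem tri_r_eq_tau (h : IsSquandle tri trid sq) (hpr : tri .p .r = .q) (t : P4) :
    tri t .r = tau t := by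
  have inj := h.tri_left_injective .r
  have hqr : tri .q .r = .p := by rw [← hpr, h.tri_tri_self P4.card.le]
  cases t
  case p => exact hpr
  case q => exact hqr
  case r => exact h.idem _
  case s =>
    cases hv : tri .s .r
    case p => cases inj (hv.trans hqr.symm)
    case q => cases inj (hv.trans hpr.symm)
    case r => cases inj (hv.trans (h.idem _).symm)
    case s => rfl

theorem eq_triP_of_actsTrivially (h : IsSquandle tri trid sq) (hpr : tri .p .r = .q)
    (hp : ActsTrivially tri .p) : tri = triP ∧ ∃ w ∈ ({.p, .q, .s} : Set P4), sq = sqP w := by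
  have hinv := h.tri_tri_self P4.card.le
  have hr := h.tri_r_eq_tau hpr
  have hq : ActsTrivially tri .q := by rwa [← hpr, h.actsTrivially_tri_iff hinv]
  have eq_s : ∀ x, tri x .r = x → ActsTrivially tri x → x = .s := by
    intro x hx hT
    cases x
    case r => exact absurd hT (not_actsTrivially_r hpr)
    case s => rfl
    all_goals rw [hr] at hx; cases hx
  have hsr : sq .r = .s := eq_s _ (h.sq_tri_self _) (h.actsTrivially_sq hinv _)
  have hs : ActsTrivially tri .s := hsr ▸ h.actsTrivially_sq hinv .r
  have hss : sq .s = .s := eq_s _ (by rw [h.sq_tri, hr]; rfl) (h.actsTrivially_sq hinv _)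
  have hsp : sq .p = tau (sq .q) := by rw [← hr, h.sq_tri, hr]; rfl
  have hw : sq .q ≠ .r := fun e => not_actsTrivially_r hpr (e ▸ h.actsTrivially_sq hinv .q)
  refine ⟨funext₂ fun a b => ?_, sq .q, ?_, funext fun x => ?_⟩
  · cases b
    exacts [hp a, hq a, hr a, hs a]
  · revert hw
    cases sq .q <;> simp
  · cases x
    exacts [hsp, rfl, hsr, hss]

theorem s3Label_tri_of_not_actsTrivially (h : IsSquandle tri trid sq) (hpr : tri .p .r = .q)
    (hp : ¬ ActsTrivially tri .p) :
    (∀ a b, s3Label (tri a b) = (s3Label b)⁻¹ * s3Label a * s3Label b) ∧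
      ∀ a, s3Label (sq a) = s3Label a ^ 2 := by
  have hinv := h.tri_tri_self P4.card.le
  have hr := h.tri_r_eq_tau hpr
  have hq : ¬ ActsTrivially tri .q := by rwa [← hpr, h.actsTrivially_tri_iff hinv]
  have eq_s : ∀ x, ActsTrivially tri x → x = .s := by
    intro x hx
    cases x
    exacts [absurd hx hp, absurd hx hq, absurd hx (not_actsTrivially_r hpr), rfl]
  have hsq : ∀ x, sq x = .s := fun x => eq_s _ (h.actsTrivially_sq hinv x)
  have hs : ActsTrivially tri .s := hsq .r ▸ h.actsTrivially_sq hinv .r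
  have hs_fixed : ∀ b, tri .s b = .s := fun b => eq_s _ ((h.actsTrivially_tri_iff hinv).2 hs)
  have inj := h.tri_left_injective .p
  have hqp : tri .q .p = .r := by
    cases hv : tri .q .p
    case p => cases inj (hv.trans (h.idem _).symm)
    case r => rfl
    case s => cases inj (hv.trans (hs_fixed _).symm)
    case q =>
      -- `· ⊲ p` would fix `p`, `q` and `s`, hence also `r`
      refine absurd (fun a => ?_) hp
      have hrp : tri .r .p = .r := by
        cases hw : tri .r .p
        case p => cases inj (hw.trans (h.idem _).symm)
        case q => cases inj (hw.trans hv.symm)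
        case r => rfl
        case s => cases inj (hw.trans (hs_fixed _).symm)
      cases a
      exacts [h.idem _, hv, hrp, hs_fixed _]
  have hpq : tri .p .q = .r := by
    have := h.self_distrib .q .p .r
    rwa [hqp, h.idem, show tri .q .r = .p from hr .q, hpr, eq_comm] at this
  have hrp : tri .r .p = .q := by rw [← hqp, hinv]
  have hrq : tri .r .q = .p := by rw [← hpq, hinv]
  refine ⟨fun a b => ?_, fun a => ?_⟩
  · cases b
    all_goals
      cases a <;>
        simp only [h.idem, hqp, hrp, hpq, hrq, hs_fixed, hr, show ∀ a, tri a .s = a from hs] <;>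
        decide
  · rw [hsq]
    cases a <;> decide

end IsSquandle

theorem IsSquandle.classification {Q : Type} {tri trid : Q → Q → Q} {sq : Q → Q}
    (h : IsSquandle tri trid sq) (hcard : Nat.card Q = 4) (hnt : ∃ a b : Q, tri a b ≠ a) :
    (∃ f : Q → Equiv.Perm (Fin 3), Injective f ∧ Set.range f = S23set ∧
        (∀ x y : Q, f (tri x y) = (f y)⁻¹ * f x * f y) ∧
        (∀ x : Q, f (sq x) = (f x) ^ 2)) ∨
      (∃ w ∈ ({P4.p, P4.q, P4.s} : Set P4), ∃ f : Q → P4, Bijective f ∧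
        (∀ x y : Q, f (tri x y) = triP (f x) (f y)) ∧ (∀ x : Q, f (sq x) = sqP w (f x))) := by
  obtain ⟨p, r, hpr⟩ := hnt
  have : Finite Q := Nat.finite_of_card_ne_zero (by omega)
  have hrp : r ≠ p := by rintro rfl; exact hpr (h.idem r)
  have hqr : tri p r ≠ r := fun e => hrp (h.tri_left_injective r (e.trans (h.idem r).symm)).symm
  obtain ⟨e, hep, heq, her⟩ := exists_equiv_P4 hcard (Ne.symm hpr) (Ne.symm hrp) hqr
  have hpr' : e.symm (tri (e .p) (e .r)) = .q := by rw [hep, her, ← heq, e.symm_apply_apply]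
  by_cases hp : ActsTrivially (fun a b => e.symm (tri (e a) (e b))) .p
  · obtain ⟨htri, w, hw, hsq⟩ := (h.comap e).eq_triP_of_actsTrivially hpr' hp
    refine Or.inr ⟨w, hw, e.symm, e.symm.bijective, fun x y => ?_, fun x => ?_⟩
    · simpa using congrFun₂ htri (e.symm x) (e.symm y)
    · simpa using congrFun hsq (e.symm x)
  · obtain ⟨htri, hsq⟩ := (h.comap e).s3Label_tri_of_not_actsTrivially hpr' hp
    refine Or.inl ⟨s3Label ∘ e.symm, s3Label_injective.comp e.symm.injective, ?_,
      fun x y => ?_, fun x => ?_⟩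
    · rw [e.symm.surjective.range_comp, range_s3Label]
    · simpa using htri (e.symm x) (e.symm y)
    · simpa using hsq (e.symm x)

theorem conj_mem_S23set {a b : Equiv.Perm (Fin 3)} (ha : a ∈ S23set) :
    b⁻¹ * a * b ∈ S23set := by
  rw [mem_S23set_iff] at ha ⊢
  calc (b⁻¹ * a * b) ^ 2 = b⁻¹ * a ^ 2 * b := by simp only [sq]; group
    _ = 1 := by rw [ha]; group

theorem sq_mem_S23set {a : Equiv.Perm (Fin 3)} (ha : a ∈ S23set) : a ^ 2 ∈ S23set := by
  rw [mem_S23set_iff] at ha ⊢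
  rw [ha, one_pow]

theorem not_exists_iso_S23set (w : P4) :
    ¬ ∃ f : P4 → Equiv.Perm (Fin 3), Injective f ∧ Set.range f = S23set ∧
      (∀ x y : P4, f (triP x y) = (f y)⁻¹ * f x * f y) ∧
      (∀ x : P4, f (sqP w x) = (f x) ^ 2) := by
  rintro ⟨f, -, hrange, htri, -⟩
  have preimage : ∀ σ ∈ S23set, ∃ x, f x = σ := by rw [← hrange]; exact fun _ => id
  obtain ⟨x, hx⟩ := preimage (Equiv.swap 0 1) (mem_S23set_iff.2 (by decide))
  obtain ⟨y, hy⟩ := preimage (Equiv.swap 1 2) (mem_S23set_iff.2 (by decide))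
  obtain ⟨z, hz⟩ := preimage (Equiv.swap 0 2) (mem_S23set_iff.2 (by decide))
  -- only `r` acts nontrivially in `P`, but both `(1 2)` and `(0 2)` move `(0 1)`
  have acts : ∀ c, f x ≠ (f c)⁻¹ * f x * f c → c = .r :=
    fun c hc => eq_r_of_triP_ne fun e => hc (by rw [← htri, e])
  have hyz : y = z :=
    (acts y (by rw [hx, hy]; decide)).trans (acts z (by rw [hx, hz]; decide)).symm
  exact absurd (hy.symm.trans (hyz ▸ hz)) (by decide)

theorem eq_id_or_eq_tau_of_triP_hom {f : P4 → P4} (hf : Injective f)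
    (htri : ∀ x y, f (triP x y) = triP (f x) (f y)) : f = id ∨ f = tau := by
  have hfr : f .r = .r := eq_r_of_triP_ne (x := f .p) fun e => by
    have := (htri .p .r).trans e
    cases hf this
  have hτ : ∀ x, f (tau x) = tau (f x) := fun x => by
    have := htri x .r
    rwa [hfr] at this
  have hfs : f .s = .s := by
    have : f .s = tau (f .s) := hτ .s
    cases hv : f .s
    case r => cases hf (hv.trans hfr.symm)
    case s => rfl
    all_goals rw [hv] at this; cases this
  cases hv : f .p
  case r => cases hf (hv.trans hfr.symm)
  case s => cases hf (hv.trans hfs.symm)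
  case p =>
    refine Or.inl (funext fun x => ?_)
    cases x
    exacts [hv, (hτ .p).trans (congrArg tau hv), hfr, hfs]
  case q =>
    refine Or.inr (funext fun x => ?_)
    cases x
    exacts [hv, (hτ .p).trans (congrArg tau hv), hfr, hfs]

theorem eq_of_triP_sqP_iso {w w' : P4} {f : P4 → P4} (hf : Injective f)
    (htri : ∀ x y, f (triP x y) = triP (f x) (f y)) (hsq : ∀ x, f (sqP w x) = sqP w' (f x)) :
    w = w' := by
  rcases eq_id_or_eq_tau_of_triP_hom hf htri with rfl | rfl
  · exact hsq .q
  · exact (tau_involutive w).symm.trans (hsq .p)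

/-- Classification of 4-element squandles with non-trivial quandle operation: each such
squandle is isomorphic either to `S²₃ ⊂ S₃` (with conjugation and squaring) or to
`(P, ⊲, ς_w)` for some `w ∈ {p, q, s}`; moreover these four structures are squandles
and are pairwise non-isomorphic. -/
theorem squandle4_classification :
    -- classification
    (∀ (Q : Type) (tri trid : Q → Q → Q) (sq : Q → Q), Nat.card Q = 4 →
      (∀ a b c, tri (tri a b) c = tri (tri a c) (tri b c)) →
      (∀ a b, trid (tri a b) b = a ∧ tri (trid a b) b = a) →
      (∀ a, tri a a = a) →
      (∀ a b, tri a (sq b) = tri (tri a b) b) →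
      (∀ a b, tri (sq a) b = sq (tri a b)) →
      (∃ a b : Q, tri a b ≠ a) →
      (∃ f : Q → Equiv.Perm (Fin 3), Function.Injective f ∧ Set.range f = S23set ∧
        (∀ x y : Q, f (tri x y) = (f y)⁻¹ * f x * f y) ∧
        (∀ x : Q, f (sq x) = (f x) ^ 2)) ∨
      (∃ w ∈ ({P4.p, P4.q, P4.s} : Set P4), ∃ f : Q → P4, Function.Bijective f ∧
        (∀ x y : Q, f (tri x y) = triP (f x) (f y)) ∧
        (∀ x : Q, f (sq x) = sqP w (f x)))) ∧
    -- S²₃ is a squandle: closure and squandle axioms for conjugation and squaring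
    (∀ a ∈ S23set, ∀ b ∈ S23set, b⁻¹ * a * b ∈ S23set ∧ a ^ 2 ∈ S23set) ∧
    (∀ a ∈ S23set, ∀ b ∈ S23set, ∀ c ∈ S23set,
      c⁻¹ * (b⁻¹ * a * b) * c
        = (c⁻¹ * b * c)⁻¹ * (c⁻¹ * a * c) * (c⁻¹ * b * c) ∧
      b * (b⁻¹ * a * b) * b⁻¹ = a ∧
      b⁻¹ * (b * a * b⁻¹) * b = a ∧
      a⁻¹ * a * a = a ∧
      (b ^ 2)⁻¹ * a * b ^ 2 = b⁻¹ * (b⁻¹ * a * b) * b ∧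
      (b⁻¹ * a * b) ^ 2 = b⁻¹ * a ^ 2 * b) ∧
    -- the structures (P, ⊲, ς_w) are squandles
    (∀ w ∈ ({P4.p, P4.q, P4.s} : Set P4),
      (∀ a b c : P4, triP (triP a b) c = triP (triP a c) (triP b c)) ∧
      (∀ a b : P4, triP (triP a b) b = a) ∧
      (∀ a : P4, triP a a = a) ∧
      (∀ a b : P4, triP a (sqP w b) = triP (triP a b) b) ∧
      (∀ a b : P4, triP (sqP w a) b = sqP w (triP a b))) ∧
    -- no (P, ⊲, ς_w) is isomorphic to S²₃
    (∀ w ∈ ({P4.p, P4.q, P4.s} : Set P4),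
      ¬ ∃ f : P4 → Equiv.Perm (Fin 3), Function.Injective f ∧ Set.range f = S23set ∧
          (∀ x y : P4, f (triP x y) = (f y)⁻¹ * f x * f y) ∧
          (∀ x : P4, f (sqP w x) = (f x) ^ 2)) ∧
    -- the three (P, ⊲, ς_w) are pairwise non-isomorphic
    (∀ w ∈ ({P4.p, P4.q, P4.s} : Set P4), ∀ w' ∈ ({P4.p, P4.q, P4.s} : Set P4), w ≠ w' →
      ¬ ∃ f : P4 → P4, Function.Bijective f ∧
          (∀ x y : P4, f (triP x y) = triP (f x) (f y)) ∧
          (∀ x : P4, f (sqP w x) = sqP w' (f x))) := by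
  refine ⟨fun Q tri trid sq hcard hsd hinv hidem hsq1 hsq2 hnt =>
    IsSquandle.classification ⟨hsd, hinv, hidem, hsq1, hsq2⟩ hcard hnt,
    fun a ha b _ => ⟨conj_mem_S23set ha, sq_mem_S23set ha⟩, ?_, ?_,
    fun w _ => not_exists_iso_S23set w,
    fun w _ w' _ hne ⟨f, hf, htri, hsq⟩ => hne (eq_of_triP_sqP_iso hf.1 htri hsq)⟩
  · intro a _ b _ c _
    refine ⟨by group, by group, by group, by group, ?_, ?_⟩ <;> simp only [sq] <;> group
  · intro w hw
    simp only [Set.mem_insert_iff, Set.mem_singleton_iff] at hw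
    rcases hw with rfl | rfl | rfl <;>
      exact ⟨by decide, by decide, by decide, by decide, by decide⟩
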